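/- arXiv:1104.1295 — 6 statements merged into one kernel-verified Lean document; each statement's English description precedes it below -/
import Mathlib

section
/- If B is a latin bitrade in Q_k^n (with k ≥ 2, n ≥ 1) and B is nonempty, then |B| ≥ 2^n. -/
/-! Only the parity of the lines matters: a nonempty set meeting every line in an even number
of points has at least `2 ^ n` points. Its slices by the hyperplanes `x_n = c` have the same
property in dimension `n - 1`, and the line in direction `n` through a point of the set contains a
second point of it, so two distinct slices are nonempty; induction doubles the bound. -/

/-- The 1-dimensional face (line) of `Q_k^n` in direction `i` through the point `a`. -/
def line {k n : ℕ} (i : Fin n) (a : Fin n → Fin k) : Set (Fin n → Fin k) :=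
  {x | ∀ j, j ≠ i → x j = a j}

/-- `B ⊆ Q_k^n` is a latin bitrade if it meets every 1-dimensional face in 0 or 2 points. -/
def IsLatinBitrade {k n : ℕ} (B : Set (Fin n → Fin k)) : Prop :=
  ∀ (i : Fin n) (a : Fin n → Fin k),
    (B ∩ line i a).ncard = 0 ∨ (B ∩ line i a).ncard = 2

variable {k n : ℕ}

def EvenOnLines (B : Set (Fin n → Fin k)) : Prop :=
  ∀ (i : Fin n) (a : Fin n → Fin k), Even (B ∩ line i a).ncard

theorem IsLatinBitrade.evenOnLines {B : Set (Fin n → Fin k)} (hB : IsLatinBitrade B) :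
    EvenOnLines B := fun i a => by
  rcases hB i a with h | h <;> simp [h]

theorem snoc_left_injective (c : Fin k) :
    Function.Injective (Fin.snoc (α := fun _ : Fin (n + 1) => Fin k) · c) :=
  fun _ _ h => (Fin.snoc_injective2 h).1

theorem snoc_mem_line_castSucc_iff (i : Fin n) (a x : Fin n → Fin k) (c : Fin k) :
    (Fin.snoc x c : Fin (n + 1) → Fin k) ∈ line i.castSucc (Fin.snoc a c) ↔ x ∈ line i a := by
  refine ⟨fun h j hj => ?_, fun h j hj => ?_⟩
  · simpa using h j.castSucc (Fin.castSucc_injective n |>.ne hj)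
  · induction j using Fin.lastCases with
    | last => simp
    | cast j => simpa using h j fun hji => hj (congrArg Fin.castSucc hji)

theorem line_castSucc_subset_range_snoc (i : Fin n) (a : Fin n → Fin k) (c : Fin k) :
    line i.castSucc (Fin.snoc a c) ⊆
      Set.range (Fin.snoc (α := fun _ : Fin (n + 1) => Fin k) · c) :=
  fun y hy => ⟨Fin.init y, by
    simpa [hy (Fin.last n) (Fin.castSucc_lt_last i).ne'] using Fin.snoc_init_self y⟩

def slice (B : Set (Fin (n + 1) → Fin k)) (c : Fin k) : Set (Fin n → Fin k) :=
  (Fin.snoc · c) ⁻¹' B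

theorem ncard_slice_inter_line (B : Set (Fin (n + 1) → Fin k)) (c : Fin k) (i : Fin n)
    (a : Fin n → Fin k) :
    (slice B c ∩ line i a).ncard = (B ∩ line i.castSucc (Fin.snoc a c)).ncard := by
  have hline : (Fin.snoc · c) ⁻¹' line i.castSucc (Fin.snoc a c) = line i a :=
    Set.ext fun x => snoc_mem_line_castSucc_iff i a x c
  rw [slice, ← hline, ← Set.preimage_inter,
    Set.ncard_preimage_of_injective_subset_range (snoc_left_injective c)]
  exact Set.inter_subset_right.trans (line_castSucc_subset_range_snoc i a c)

theorem evenOnLines_slice {B : Set (Fin (n + 1) → Fin k)} (hB : EvenOnLines B) (c : Fin k) :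
    EvenOnLines (slice B c) := fun i a => by
  rw [ncard_slice_inter_line]
  exact hB i.castSucc (Fin.snoc a c)

theorem ncard_slice_add_ncard_slice_le (B : Set (Fin (n + 1) → Fin k)) {c₀ c₁ : Fin k}
    (hc : c₀ ≠ c₁) : (slice B c₀).ncard + (slice B c₁).ncard ≤ B.ncard := by
  have hdisj : Disjoint ((Fin.snoc (α := fun _ => Fin k) · c₀) '' slice B c₀)
      ((Fin.snoc (α := fun _ => Fin k) · c₁) '' slice B c₁) := by
    rw [Set.disjoint_left]
    rintro _ ⟨x, -, rfl⟩ ⟨y, -, hyx⟩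
    exact hc (Fin.snoc_injective2 hyx).2.symm
  rw [← Set.ncard_image_of_injective (slice B c₀) (snoc_left_injective c₀),
    ← Set.ncard_image_of_injective (slice B c₁) (snoc_left_injective c₁),
    ← Set.ncard_union_eq hdisj]
  refine Set.ncard_le_ncard ?_
  rintro _ (⟨x, hx, rfl⟩ | ⟨x, hx, rfl⟩) <;> exact hx

theorem EvenOnLines.exists_ne_slice_nonempty {B : Set (Fin (n + 1) → Fin k)}
    (hB : EvenOnLines B) (hne : B.Nonempty) :
    ∃ c₀ c₁ : Fin k, c₀ ≠ c₁ ∧ (slice B c₀).Nonempty ∧ (slice B c₁).Nonempty := by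
  obtain ⟨b, hb⟩ := hne
  have hb_line : b ∈ B ∩ line (Fin.last n) b := ⟨hb, fun _ _ => rfl⟩
  obtain ⟨b', ⟨hb'B, hb'_line⟩, hb'b⟩ := Set.exists_ne_of_one_lt_ncard
    (Set.one_lt_ncard_of_nonempty_of_even (Set.toFinite _) ⟨b, hb_line⟩ (hB _ b)) b
  have hlast : b (Fin.last n) ≠ b' (Fin.last n) := fun h => hb'b <| by
    rw [← Fin.snoc_init_self b, ← Fin.snoc_init_self b', h]
    congr 1
    funext j
    exact hb'_line j.castSucc (Fin.castSucc_lt_last j).ne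
  refine ⟨_, _, hlast, ⟨Fin.init b, ?_⟩, ⟨Fin.init b', ?_⟩⟩
  · simpa [slice, Fin.snoc_init_self] using hb
  · simpa [slice, Fin.snoc_init_self] using hb'B

theorem EvenOnLines.two_pow_le_ncard {B : Set (Fin n → Fin k)} (hB : EvenOnLines B)
    (hne : B.Nonempty) : 2 ^ n ≤ B.ncard := by
  induction n with
  | zero => exact (Set.ncard_pos (Set.toFinite B)).mpr hne
  | succ n ih =>
    obtain ⟨c₀, c₁, hc, hne₀, hne₁⟩ := hB.exists_ne_slice_nonempty hne
    calc 2 ^ (n + 1) = 2 ^ n + 2 ^ n := by ring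
      _ ≤ (slice B c₀).ncard + (slice B c₁).ncard :=
        add_le_add (ih (evenOnLines_slice hB c₀) hne₀)
          (ih (evenOnLines_slice hB c₁) hne₁)
      _ ≤ B.ncard := ncard_slice_add_ncard_slice_le B hc

theorem stmt_0_general (k n : ℕ) (B : Set (Fin n → Fin k))
    (hB : IsLatinBitrade B) (hne : B.Nonempty) : 2 ^ n ≤ B.ncard :=
  hB.evenOnLines.two_pow_le_ncard hne

theorem stmt_0 (k n : ℕ) (hk : 2 ≤ k) (hn : 1 ≤ n) (B : Set (Fin n → Fin k))
    (hB : IsLatinBitrade B) (hne : B.Nonempty) : 2 ^ n ≤ B.ncard :=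
  stmt_0_general k n B hB hne
end

section
/- Let B be a nonempty latin bitrade in Q_k^n. Then |B| = 2^n if and only if for every m-dimensional face F of Q_k^n (0 ≤ m ≤ n) the cardinality |B ∩ F| equals 0 or 2^m. -/
/-- The face of `Q_k^n` with set `I` of free coordinates, through the point `a`.
Its dimension is `I.card`. -/
def face {k n : ℕ} (I : Finset (Fin n)) (a : Fin n → Fin k) : Set (Fin n → Fin k) :=
  {x | ∀ j, j ∉ I → x j = a j}

theorem Set.ncard_mul_le_ncard_biUnion {ι α : Type*} {t : Set ι} (ht : t.Finite)
    {s : ι → Set α} (hs : ∀ i ∈ t, (s i).Finite) (h : t.PairwiseDisjoint s) {m : ℕ}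
    (hm : ∀ i ∈ t, m ≤ (s i).ncard) : t.ncard * m ≤ (⋃ i ∈ t, s i).ncard := by
  rw [ht.ncard_biUnion hs h, finsum_mem_eq_finite_toFinset_sum _ ht,
    Set.ncard_eq_toFinset_card t ht]
  simpa using Finset.card_nsmul_le_sum _ _ m fun i hi => hm i (ht.mem_toFinset.mp hi)

section

variable {k n : ℕ}

theorem mem_face_self (I : Finset (Fin n)) (a : Fin n → Fin k) : a ∈ face I a :=
  fun _ _ => rfl

theorem face_univ (a : Fin n → Fin k) : face Finset.univ a = Set.univ := by
  ext x
  simp [face]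

theorem face_mono {I J : Finset (Fin n)} (h : I ⊆ J) (a : Fin n → Fin k) :
    face I a ⊆ face J a :=
  fun _ hx j hj => hx j fun hjI => hj (h hjI)

theorem face_eq_of_mem {I : Finset (Fin n)} {a b : Fin n → Fin k} (hb : b ∈ face I a) :
    face I b = face I a := by
  ext x
  exact forall_congr' fun j => imp_congr_right fun hj => by rw [hb j hj]

theorem line_eq_face_singleton (i : Fin n) (a : Fin n → Fin k) : line i a = face {i} a := by
  simp [line, face]

theorem disjoint_face_of_ne {I : Finset (Fin n)} {a b : Fin n → Fin k} {j : Fin n}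
    (hj : j ∉ I) (hab : a j ≠ b j) : Disjoint (face I a) (face I b) :=
  Set.disjoint_left.mpr fun _ hxa hxb => hab ((hxa j hj).symm.trans (hxb j hj))

theorem apply_ne_of_mem_line_of_ne {i : Fin n} {a b : Fin n → Fin k} (hb : b ∈ line i a)
    (hba : b ≠ a) : b i ≠ a i := fun h =>
  hba <| funext fun j => if hj : j = i then hj ▸ h else hb j hj

theorem pairwiseDisjoint_face_compl (I : Finset (Fin n)) (a : Fin n → Fin k) :
    (face I a).PairwiseDisjoint (face Iᶜ) := by
  intro x hx y hy hxy
  obtain ⟨j, hj⟩ := Function.ne_iff.mp hxy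
  have hjI : j ∈ I := by
    by_contra hjI
    exact hj ((hx j hjI).trans (hy j hjI).symm)
  exact disjoint_face_of_ne (Finset.notMem_compl.mpr hjI) hj

def IsPairedIn (S : Set (Fin n → Fin k)) (J : Finset (Fin n)) : Prop :=
  ∀ j ∈ J, ∀ x ∈ S, ∃ y ∈ S ∩ line j x, y ≠ x

theorem IsPairedIn.mono {S : Set (Fin n → Fin k)} {I J : Finset (Fin n)}
    (hS : IsPairedIn S J) (h : I ⊆ J) : IsPairedIn S I :=
  fun j hj => hS j (h hj)

/-- The face `face (insert j J) s` contains the two disjoint faces `face J s` and `face J s'`,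
where `s'` is the partner of `s` in direction `j`. -/
theorem IsPairedIn.two_pow_card_le_ncard_inter_face {S : Set (Fin n → Fin k)}
    {J : Finset (Fin n)} (hS : IsPairedIn S J) {s : Fin n → Fin k} (hs : s ∈ S) :
    2 ^ J.card ≤ (S ∩ face J s).ncard := by
  induction J using Finset.induction_on generalizing s with
  | empty =>
    have : s ∈ S ∩ face ∅ s := ⟨hs, mem_face_self ∅ s⟩
    simpa [Nat.one_le_iff_ne_zero] using Set.ncard_ne_zero_of_mem this
  | @insert j J hjJ ih =>
    have ih := @ih (hS.mono (Finset.subset_insert j J))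
    obtain ⟨s', ⟨hs'S, hs'⟩, hs's⟩ := hS j (Finset.mem_insert_self j J) s hs
    have hs'face : s' ∈ face (insert j J) s := by
      rw [line_eq_face_singleton] at hs'
      exact face_mono (by simp) s hs'
    have hdisj : Disjoint (S ∩ face J s) (S ∩ face J s') :=
      (disjoint_face_of_ne hjJ (apply_ne_of_mem_line_of_ne hs' hs's).symm).mono
        Set.inter_subset_right Set.inter_subset_right
    have hsub : (S ∩ face J s) ∪ (S ∩ face J s') ⊆ S ∩ face (insert j J) s := by
      rw [← Set.inter_union_distrib_left, ← face_eq_of_mem hs'face]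
      refine Set.inter_subset_inter_right S (Set.union_subset ?_ ?_)
      · exact (face_mono (Finset.subset_insert j J) s).trans (face_eq_of_mem hs'face).ge
      · exact face_mono (Finset.subset_insert j J) s'
    calc 2 ^ (insert j J).card = 2 ^ J.card + 2 ^ J.card := by
          rw [Finset.card_insert_of_notMem hjJ, pow_succ, mul_two]
      _ ≤ (S ∩ face J s).ncard + (S ∩ face J s').ncard := add_le_add (ih hs) (ih hs'S)
      _ = ((S ∩ face J s) ∪ (S ∩ face J s')).ncard := (Set.ncard_union_eq hdisj).symm
      _ ≤ (S ∩ face (insert j J) s).ncard := Set.ncard_le_ncard hsub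

theorem IsLatinBitrade.isPairedIn {B : Set (Fin n → Fin k)} (hB : IsLatinBitrade B)
    (J : Finset (Fin n)) : IsPairedIn B J := by
  intro j _ x hx
  have htwo : (B ∩ line j x).ncard = 2 :=
    (hB j x).resolve_left (Set.ncard_ne_zero_of_mem ⟨hx, fun _ _ => rfl⟩)
  exact Set.exists_ne_of_one_lt_ncard (by omega) x

theorem IsLatinBitrade.ncard_inter_face_mul_le {B : Set (Fin n → Fin k)}
    (hB : IsLatinBitrade B) (I : Finset (Fin n)) (a : Fin n → Fin k) :
    (B ∩ face I a).ncard * 2 ^ Iᶜ.card ≤ B.ncard := by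
  have hdisj : (B ∩ face I a).PairwiseDisjoint fun x => B ∩ face Iᶜ x :=
    ((pairwiseDisjoint_face_compl I a).subset Set.inter_subset_right).mono
      fun _ => Set.inter_subset_right
  calc (B ∩ face I a).ncard * 2 ^ Iᶜ.card
      ≤ (⋃ x ∈ B ∩ face I a, B ∩ face Iᶜ x).ncard :=
        Set.ncard_mul_le_ncard_biUnion (Set.toFinite _) (fun _ _ => Set.toFinite _) hdisj
          fun x hx => (hB.isPairedIn Iᶜ).two_pow_card_le_ncard_inter_face hx.1
    _ ≤ B.ncard := Set.ncard_le_ncard (Set.iUnion₂_subset fun _ _ => Set.inter_subset_left)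

end

theorem stmt_1 (k n : ℕ) (B : Set (Fin n → Fin k))
    (hB : IsLatinBitrade B) (hne : B.Nonempty) :
    B.ncard = 2 ^ n ↔
      ∀ (I : Finset (Fin n)) (a : Fin n → Fin k),
        (B ∩ face I a).ncard = 0 ∨ (B ∩ face I a).ncard = 2 ^ I.card := by
  constructor
  · intro hcard I a
    rcases (B ∩ face I a).eq_empty_or_nonempty with hempty | ⟨b, hbB, hbI⟩
    · exact Or.inl (by rw [hempty, Set.ncard_empty])
    refine Or.inr (le_antisymm ?_ ?_)
    · have hsplit : 2 ^ n = 2 ^ I.card * 2 ^ Iᶜ.card := by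
        rw [← pow_add, Finset.card_add_card_compl, Fintype.card_fin]
      have := hB.ncard_inter_face_mul_le I a
      rw [hcard, hsplit] at this
      exact Nat.le_of_mul_le_mul_right this (by positivity)
    · rw [← face_eq_of_mem hbI]
      exact (hB.isPairedIn I).two_pow_card_le_ncard_inter_face hbB
  · intro h
    obtain ⟨b, hb⟩ := hne
    have hpos : (B ∩ face Finset.univ b).ncard ≠ 0 :=
      Set.ncard_ne_zero_of_mem ⟨hb, mem_face_self _ b⟩
    simpa [face_univ] using (h Finset.univ b).resolve_left hpos
end

section
/- Let B be a nonempty latin bitrade in Q_k^n. Then |B| = 2^n if and only if for each coordinate direction i ∈ {1,…,n} the set B meets exactly two of the k hyperfaces {x ∈ Q_k^n : x_i = a}, a ∈ Q_k. -/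
/-- The hyperface of direction `i` determined by the value `a`. -/
def hyperface {k n : ℕ} (i : Fin n) (a : Fin k) : Set (Fin n → Fin k) :=
  {x | x i = a}

/-!
Every point `x` of a bitrade `B` has, in each direction `i`, a mate: a second point of `B` on the
line through `x` in direction `i`. Doubling along the directions of a set `S` one at a time shows
that the subcube through `x` in the directions `S` contains at least `2 ^ #S` points of `B`. In
particular `2 ^ n ≤ |B|`, and every nonempty slice `B ∩ hyperface i a` has at least `2 ^ (n - 1)`
points, so if `|B| = 2 ^ n` then `B` meets at most (and, by the mates, at least) two hyperfaces of
each direction. Conversely `B` lies in the product of its coordinate projections, so if each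
projection has two values then `|B| ≤ 2 ^ n`.
-/

theorem Set.ncard_le_prod_ncard_image_eval {ι : Type*} [Fintype ι] {α : ι → Type*}
    {s : Set (∀ i, α i)} (hs : s.Finite) :
    s.ncard ≤ ∏ i, ((fun x => x i) '' s).ncard := by
  have hpi : (Set.univ.pi fun i => (fun x => x i) '' s).Finite :=
    Set.Finite.pi fun i => hs.image _
  calc s.ncard ≤ (Set.univ.pi fun i => (fun x => x i) '' s).ncard :=
        Set.ncard_le_ncard (fun x hx i _ => ⟨x, hx, rfl⟩) hpi
    _ = ∏ i, ((fun x => x i) '' s).ncard := by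
        rw [← Nat.card_coe_set_eq, Nat.card_congr (Equiv.Set.univPi _), Nat.card_pi]
        simp only [Nat.card_coe_set_eq]

theorem Set.mul_ncard_image_le_ncard {α β : Type*} {s : Set α} (hs : s.Finite) (f : α → β)
    (m : ℕ) (hm : ∀ b ∈ f '' s, m ≤ (s ∩ f ⁻¹' {b}).ncard) :
    m * (f '' s).ncard ≤ s.ncard := by
  classical
  have key := Finset.mul_card_image_le_card hs.toFinset m (f := f) fun b hb => by
    convert hm b (by simpa using hb) using 1
    rw [← Set.ncard_coe_finset]
    congr 1
    ext x
    simp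
  rwa [← Set.ncard_coe_finset, Finset.coe_image, hs.coe_toFinset, ← Set.ncard_coe_finset,
    hs.coe_toFinset] at key

section

variable {k n : ℕ} {B : Set (Fin n → Fin k)}

def subcube (S : Finset (Fin n)) (x : Fin n → Fin k) : Set (Fin n → Fin k) :=
  {y | ∀ j ∉ S, y j = x j}

namespace IsLatinBitrade

theorem exists_mate (hB : IsLatinBitrade B) {x : Fin n → Fin k} (hx : x ∈ B) (i : Fin n) :
    ∃ y ∈ B, y i ≠ x i ∧ ∀ j ≠ i, y j = x j := by
  have hx' : x ∈ B ∩ line i x := ⟨hx, fun _ _ => rfl⟩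
  have h2 : (B ∩ line i x).ncard = 2 := (hB i x).resolve_left (Set.ncard_ne_zero_of_mem hx')
  obtain ⟨y, ⟨hyB, hyx⟩, hne⟩ := Set.exists_ne_of_one_lt_ncard (h2 ▸ one_lt_two) x
  refine ⟨y, hyB, fun hi => hne (funext fun j => ?_), hyx⟩
  by_cases hj : j = i
  · exact hj ▸ hi
  · exact hyx j hj

theorem two_pow_card_le_ncard_inter_subcube (hB : IsLatinBitrade B) (S : Finset (Fin n))
    {x : Fin n → Fin k} (hx : x ∈ B) : 2 ^ S.card ≤ (B ∩ subcube S x).ncard := by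
  induction S using Finset.induction_on generalizing x with
  | empty =>
    exact Nat.one_le_iff_ne_zero.mpr (Set.ncard_ne_zero_of_mem ⟨hx, fun _ _ => rfl⟩)
  | insert i S hi ih =>
    obtain ⟨y, hyB, hyi, hyx⟩ := hB.exists_mate hx i
    have hsub_x : subcube S x ⊆ subcube (insert i S) x :=
      fun z hz j hj => hz j fun h => hj (Finset.mem_insert_of_mem h)
    have hsub_y : subcube S y ⊆ subcube (insert i S) x := fun z hz j hj => by
      rw [Finset.mem_insert, not_or] at hj
      rw [hz j hj.2, hyx j hj.1]
    have hdisj : Disjoint (B ∩ subcube S x) (B ∩ subcube S y) :=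
      Set.disjoint_left.mpr fun z hzx hzy => hyi ((hzy.2 i hi).symm.trans (hzx.2 i hi))
    calc 2 ^ (insert i S).card = 2 ^ S.card + 2 ^ S.card := by
          rw [Finset.card_insert_of_notMem hi, pow_succ, mul_two]
      _ ≤ (B ∩ subcube S x).ncard + (B ∩ subcube S y).ncard := add_le_add (ih hx) (ih hyB)
      _ = (B ∩ subcube S x ∪ B ∩ subcube S y).ncard := (Set.ncard_union_eq hdisj).symm
      _ ≤ (B ∩ subcube (insert i S) x).ncard := Set.ncard_le_ncard
          (Set.union_subset (Set.inter_subset_inter_right B hsub_x)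
            (Set.inter_subset_inter_right B hsub_y))

theorem two_pow_le_ncard (hB : IsLatinBitrade B) (hne : B.Nonempty) : 2 ^ n ≤ B.ncard := by
  obtain ⟨x, hx⟩ := hne
  have hcube : subcube Finset.univ x = Set.univ := by
    ext y
    simp [subcube]
  simpa [hcube] using hB.two_pow_card_le_ncard_inter_subcube Finset.univ hx

theorem two_pow_pred_le_ncard_inter_hyperface (hB : IsLatinBitrade B) {x : Fin n → Fin k}
    (hx : x ∈ B) (i : Fin n) : 2 ^ (n - 1) ≤ (B ∩ hyperface i (x i)).ncard := by
  have hcube : subcube (Finset.univ.erase i) x = hyperface i (x i) := by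
    ext y
    simp [subcube, hyperface]
  simpa [hcube] using hB.two_pow_card_le_ncard_inter_subcube (Finset.univ.erase i) hx

theorem ncard_image_eval_eq_two (hB : IsLatinBitrade B) (hcard : B.ncard = 2 ^ n) (i : Fin n) :
    ((fun x => x i) '' B).ncard = 2 := by
  obtain ⟨x, hx⟩ : B.Nonempty :=
    Set.nonempty_of_ncard_ne_zero (hcard ▸ (pow_pos two_pos n).ne')
  obtain ⟨y, hyB, hyi, -⟩ := hB.exists_mate hx i
  have hge : 1 < ((fun x => x i) '' B).ncard :=
    (Set.one_lt_ncard_iff).mpr ⟨x i, y i, ⟨x, hx, rfl⟩, ⟨y, hyB, rfl⟩, hyi.symm⟩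
  have hle : 2 ^ (n - 1) * ((fun x => x i) '' B).ncard ≤ 2 ^ (n - 1) * 2 := by
    rw [← pow_succ, Nat.sub_add_cancel i.pos, ← hcard]
    refine Set.mul_ncard_image_le_ncard B.toFinite _ _ ?_
    rintro _ ⟨z, hz, rfl⟩
    exact hB.two_pow_pred_le_ncard_inter_hyperface hz i
  have := Nat.le_of_mul_le_mul_left hle (pow_pos two_pos _)
  omega

end IsLatinBitrade

end

theorem stmt_2 (k n : ℕ) (B : Set (Fin n → Fin k))
    (hB : IsLatinBitrade B) (hne : B.Nonempty) :
    B.ncard = 2 ^ n ↔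
      ∀ i : Fin n, {a : Fin k | (B ∩ hyperface i a).Nonempty}.ncard = 2 := by
  have hvalues : ∀ i : Fin n,
      {a : Fin k | (B ∩ hyperface i a).Nonempty} = (fun x => x i) '' B := fun _ => rfl
  simp only [hvalues]
  refine ⟨hB.ncard_image_eval_eq_two, fun h => le_antisymm ?_ (hB.two_pow_le_ncard hne)⟩
  simpa [h] using Set.ncard_le_prod_ncard_image_eval B.toFinite
end

section
/- The number of latin bitrades (including the empty one) in Q_3^n is exactly 2^{2^n}. -/
/-!
The latin bitrades of `Q_3^n` are closed under symmetric difference, because two 2-subsets of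
a 3-set meet. A nonempty bitrade meets `{1,2}^n`: in a point of it with fewest zero coordinates,
a zero coordinate would give a line whose second point has fewer zeros. Hence a bitrade is
determined by its trace on `{1,2}^n`. Conversely the box `∏ᵢ {0, fᵢ}` is a bitrade whose trace is
the single point `f`, so symmetric differences of boxes realise every trace. Thus bitrades
correspond to the `2^(2^n)` subsets of `{1,2}^n`.
-/

open Function Set
open scoped symmDiff

section AnyAlphabet

variable {k n : ℕ}

lemma line_eq_range_update (i : Fin n) (a : Fin n → Fin k) :
    line i a = range (update a i) := by
  ext x
  refine ⟨fun hx => ⟨x i, ?_⟩, ?_⟩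
  · ext j
    by_cases hj : j = i
    · subst hj; simp
    · simp [hj, hx j hj]
  · rintro ⟨v, rfl⟩ j hj
    exact update_of_ne hj v a

lemma ncard_inter_line (B : Set (Fin n → Fin k)) (i : Fin n) (a : Fin n → Fin k) :
    (B ∩ line i a).ncard = (update a i ⁻¹' B).ncard := by
  rw [line_eq_range_update, ← image_preimage_eq_inter_range,
    ncard_image_of_injective _ (update_injective a i)]

lemma isLatinBitrade_iff {B : Set (Fin n → Fin k)} :
    IsLatinBitrade B ↔
      ∀ i a, (update a i ⁻¹' B).ncard = 0 ∨ (update a i ⁻¹' B).ncard = 2 := by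
  simp only [IsLatinBitrade, ncard_inter_line]

lemma isLatinBitrade_univ_pi {t : Fin n → Set (Fin k)} (ht : ∀ i, (t i).ncard = 2) :
    IsLatinBitrade (univ.pi t) := by
  refine isLatinBitrade_iff.2 fun i a => ?_
  by_cases ha : ∀ j ≠ i, a j ∈ t j
  · exact .inr (update_preimage_univ_pi ha ▸ ht i)
  · push Not at ha
    obtain ⟨j, hji, hj⟩ := ha
    refine .inl ((ncard_eq_zero (toFinite _)).2 (eq_empty_of_forall_notMem fun v hv => hj ?_))
    simpa [hji] using hv j (mem_univ j)

lemma card_zeros_update_lt {x : Fin n → Fin (k + 1)} {i : Fin n} (hi : x i = 0)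
    {v : Fin (k + 1)} (hv : v ≠ 0) :
    (Finset.univ.filter fun j => update x i v j = 0).card <
      (Finset.univ.filter fun j => x j = 0).card := by
  refine Finset.card_lt_card
    ((Finset.ssubset_iff_of_subset ?_).2 ⟨i, by simp [hi], by simp [hv]⟩)
  intro j
  by_cases hj : j = i
  · subst hj; simp [hv]
  · simp [hj]

lemma IsLatinBitrade.exists_succ_comp_mem {B : Set (Fin n → Fin (k + 1))}
    (hB : IsLatinBitrade B) (hne : B.Nonempty) : ∃ f : Fin n → Fin k, Fin.succ ∘ f ∈ B := by
  obtain ⟨x, hxB, hmin⟩ :=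
    B.exists_min_image (fun x => (Finset.univ.filter fun j => x j = 0).card) B.toFinite hne
  by_cases hx : ∀ i, x i ≠ 0
  · refine ⟨fun i => (x i).pred (hx i), ?_⟩
    convert hxB
    simp [funext_iff]
  push Not at hx
  obtain ⟨i, hi⟩ := hx
  have h0 : (0 : Fin (k + 1)) ∈ update x i ⁻¹' B := by
    simpa [← hi] using hxB
  have h2 : (update x i ⁻¹' B).ncard = 2 :=
    (isLatinBitrade_iff.1 hB i x).resolve_left
      (ncard_ne_zero_of_mem h0 (toFinite _))
  obtain ⟨v, hvB, hv⟩ :=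
    exists_ne_of_one_lt_ncard (s := update x i ⁻¹' B) (by omega) (0 : Fin (k + 1))
  exact absurd (hmin _ hvB) (not_le.2 (card_zeros_update_lt hi hv))

end AnyAlphabet

section Ternary

variable {n : ℕ}

lemma ncard_symmDiff_eq_zero_or_two {s t : Set (Fin 3)} (hs : s.ncard = 0 ∨ s.ncard = 2)
    (ht : t.ncard = 0 ∨ t.ncard = 2) : (s ∆ t).ncard = 0 ∨ (s ∆ t).ncard = 2 := by
  classical
  have key : ∀ s t : Finset (Fin 3), (s.card = 0 ∨ s.card = 2) → (t.card = 0 ∨ t.card = 2) →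
      (s ∆ t).card = 0 ∨ (s ∆ t).card = 2 := by decide
  simp only [ncard_eq_toFinset_card', toFinset_symmDiff] at *
  exact key _ _ hs ht

lemma IsLatinBitrade.symmDiff {B C : Set (Fin n → Fin 3)} (hB : IsLatinBitrade B)
    (hC : IsLatinBitrade C) : IsLatinBitrade (B ∆ C) := by
  rw [isLatinBitrade_iff] at *
  intro i a
  rw [preimage_symmDiff]
  exact ncard_symmDiff_eq_zero_or_two (hB i a) (hC i a)

lemma IsLatinBitrade.eq_of_preimage_succ_comp_eq {B C : Set (Fin n → Fin 3)}
    (hB : IsLatinBitrade B) (hC : IsLatinBitrade C)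
    (h : (Fin.succ ∘ ·) ⁻¹' B = (Fin.succ ∘ ·) ⁻¹' C) : B = C := by
  by_contra hne
  obtain ⟨f, hf⟩ := (hB.symmDiff hC).exists_succ_comp_mem (symmDiff_nonempty.2 hne)
  have : f ∈ (Fin.succ ∘ ·) ⁻¹' (B ∆ C) := hf
  simp [preimage_symmDiff, h] at this

lemma preimage_succ_comp_box (f : Fin n → Fin 2) :
    (Fin.succ ∘ ·) ⁻¹' univ.pi (fun i => ({0, (f i).succ} : Set (Fin 3))) = {f} := by
  ext g
  simp [funext_iff, Fin.succ_ne_zero]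

lemma exists_isLatinBitrade_preimage_succ_comp_eq (T : Set (Fin n → Fin 2)) :
    ∃ B : Set (Fin n → Fin 3), IsLatinBitrade B ∧ (Fin.succ ∘ ·) ⁻¹' B = T := by
  induction T, T.toFinite using Set.Finite.induction_on with
  | empty => exact ⟨∅, fun i a => .inl (by simp), rfl⟩
  | @insert f T hfT _ ih =>
    obtain ⟨B, hB, hBT⟩ := ih
    have hbox : IsLatinBitrade (univ.pi fun i => ({0, (f i).succ} : Set (Fin 3))) :=
      isLatinBitrade_univ_pi fun i => ncard_pair (Fin.succ_ne_zero (f i)).symm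
    refine ⟨_ ∆ B, hbox.symmDiff hB, ?_⟩
    rw [preimage_symmDiff, preimage_succ_comp_box, hBT]
    ext g
    by_cases hg : g = f
    · subst hg; simp [Set.mem_symmDiff, hfT]
    · simp [Set.mem_symmDiff, hg]

end Ternary

theorem stmt_5 (n : ℕ) :
    {B : Set (Fin n → Fin 3) | IsLatinBitrade B}.ncard = 2 ^ (2 ^ n) := by
  let trace (B : {B : Set (Fin n → Fin 3) | IsLatinBitrade B}) : Set (Fin n → Fin 2) :=
    (Fin.succ ∘ ·) ⁻¹' B
  have htrace : Bijective trace := by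
    refine ⟨fun B C h => Subtype.ext (B.2.eq_of_preimage_succ_comp_eq C.2 h), fun T => ?_⟩
    obtain ⟨B, hB, hBT⟩ := exists_isLatinBitrade_preimage_succ_comp_eq T
    exact ⟨⟨B, hB⟩, hBT⟩
  rw [← Nat.card_coe_set_eq, Nat.card_eq_of_bijective trace htrace]
  simp
end

section
/- If B_1 ⊆ Q_k^n and B_2 ⊆ Q_k^m are bipartite latin bitrades, then the Cartesian product B_1 × B_2 ⊆ Q_k^{n+m} is a bipartite latin bitrade. -/
/-- The Hamming graph `Γ Q_k^n`. -/
def hammingGraph (k n : ℕ) : SimpleGraph (Fin n → Fin k) where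
  Adj x y := hammingDist x y = 1
  symm := by
    constructor
    intro x y h
    rwa [hammingDist_comm]
  loopless := by
    constructor
    intro x h
    simp [hammingDist_self] at h

/-- A latin bitrade is bipartite if the subgraph of the Hamming graph induced by it
is bipartite (2-colorable). -/
def IsBipartiteBitrade {k n : ℕ} (B : Set (Fin n → Fin k)) : Prop :=
  IsLatinBitrade B ∧ ((hammingGraph k n).induce B).Colorable 2

/-- The Cartesian product via concatenation of tuples. -/
def cartProd {k n m : ℕ} (B₁ : Set (Fin n → Fin k)) (B₂ : Set (Fin m → Fin k)) :
    Set (Fin (n + m) → Fin k) :=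
  {z | ∃ x ∈ B₁, ∃ y ∈ B₂, z = Fin.append x y}

/-!
Concatenation `Fin.appendEquiv` identifies `Q_k^{n+m}` with `Q_k^n × Q_k^m`; since Hamming
distances add up, it carries the box product of the two Hamming graphs onto the Hamming graph,
and `B₁ × B₂` is the image of the product set. A line of `Q_k^{n+m}` in a direction of the first
block through `(x, y)` is the image of `line i x ×ˢ {y}`, so it meets `B₁ × B₂` in
`|B₁ ∩ line i x| · |B₂ ∩ {y}| ∈ {0, 2} · {0, 1}` points. Proper colorings `c₁, c₂` with values in
`Fin 2` give the proper coloring `(x, y) ↦ c₁ x + c₂ y` of the box product.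
-/

open SimpleGraph

theorem Fin.castAdd_ne_natAdd {n m : ℕ} (i : Fin n) (j : Fin m) :
    Fin.castAdd m i ≠ Fin.natAdd n j := by
  simp only [ne_eq, Fin.ext_iff, Fin.val_castAdd, Fin.val_natAdd]
  omega

theorem hammingDist_append {α : Type*} [DecidableEq α] {n m : ℕ} (x x' : Fin n → α)
    (y y' : Fin m → α) :
    hammingDist (Fin.append x y) (Fin.append x' y') = hammingDist x x' + hammingDist y y' := by
  simp only [hammingDist, Finset.card_filter, Fin.sum_univ_add, Fin.append_left, Fin.append_right]

namespace SimpleGraph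

variable {α β γ : Type*} {G : SimpleGraph α} {H : SimpleGraph β}

def Coloring.boxProd [Add γ] [IsCancelAdd γ] (f : G.Coloring γ) (g : H.Coloring γ) :
    (G □ H).Coloring γ :=
  Coloring.mk (fun p => f p.1 + g p.2) fun {p q} hpq => by
    rcases boxProd_adj.mp hpq with ⟨hadj, heq⟩ | ⟨hadj, heq⟩
    · rw [heq]
      exact fun h => f.valid hadj (add_right_cancel h)
    · rw [heq]
      exact fun h => g.valid hadj (add_left_cancel h)

theorem Colorable.boxProd {n : ℕ} (hG : G.Colorable n) (hH : H.Colorable n) :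
    (G □ H).Colorable n :=
  let ⟨f⟩ := hG
  let ⟨g⟩ := hH
  ⟨f.boxProd g⟩

def induceProdHom (s : Set α) (t : Set β) : (G □ H).induce (s ×ˢ t) →g G.induce s □ H.induce t where
  toFun p := (⟨p.1.1, p.2.1⟩, ⟨p.1.2, p.2.2⟩)
  map_rel' hpq := by simpa [boxProd_adj, Subtype.ext_iff] using hpq

theorem Colorable.induce_prod {s : Set α} {t : Set β} {n : ℕ} (hs : (G.induce s).Colorable n)
    (ht : (H.induce t).Colorable n) : ((G □ H).induce (s ×ˢ t)).Colorable n :=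
  (hs.boxProd ht).of_hom (induceProdHom s t)

end SimpleGraph

section Concatenation

variable {k n m : ℕ}

def hammingGraphAppendIso (k n m : ℕ) :
    (hammingGraph k n □ hammingGraph k m) ≃g hammingGraph k (n + m) where
  toEquiv := Fin.appendEquiv n m
  map_rel_iff' {p q} := by
    change hammingDist (Fin.append p.1 p.2) (Fin.append q.1 q.2) = 1 ↔ _
    rw [hammingDist_append, boxProd_adj]
    change _ ↔ hammingDist p.1 q.1 = 1 ∧ _ ∨ hammingDist p.2 q.2 = 1 ∧ _
    rw [← hammingDist_eq_zero (x := p.2), ← hammingDist_eq_zero (x := p.1)]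
    omega

theorem cartProd_eq_image (B₁ : Set (Fin n → Fin k)) (B₂ : Set (Fin m → Fin k)) :
    cartProd B₁ B₂ = Fin.appendEquiv n m '' (B₁ ×ˢ B₂) := by
  ext z
  constructor
  · rintro ⟨x, hx, y, hy, rfl⟩
    exact ⟨(x, y), ⟨hx, hy⟩, rfl⟩
  · rintro ⟨⟨x, y⟩, ⟨hx, hy⟩, rfl⟩
    exact ⟨x, hx, y, hy, rfl⟩

theorem line_castAdd_append (i : Fin n) (x : Fin n → Fin k) (y : Fin m → Fin k) :
    line (Fin.castAdd m i) (Fin.append x y) = Fin.appendEquiv n m '' (line i x ×ˢ {y}) := by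
  ext z
  obtain ⟨⟨x', y'⟩, rfl⟩ := (Fin.appendEquiv n m).surjective z
  simp [line, Fin.forall_fin_add, funext_iff, (Fin.castAdd_ne_natAdd _ _).symm]

theorem line_natAdd_append (i : Fin m) (x : Fin n → Fin k) (y : Fin m → Fin k) :
    line (Fin.natAdd n i) (Fin.append x y) = Fin.appendEquiv n m '' ({x} ×ˢ line i y) := by
  ext z
  obtain ⟨⟨x', y'⟩, rfl⟩ := (Fin.appendEquiv n m).surjective z
  simp [line, Fin.forall_fin_add, funext_iff, Fin.castAdd_ne_natAdd]

theorem ncard_cartProd_inter_line_castAdd (B₁ : Set (Fin n → Fin k)) (B₂ : Set (Fin m → Fin k))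
    (i : Fin n) (x : Fin n → Fin k) (y : Fin m → Fin k) :
    (cartProd B₁ B₂ ∩ line (Fin.castAdd m i) (Fin.append x y)).ncard =
      (B₁ ∩ line i x).ncard * (B₂ ∩ {y}).ncard := by
  rw [cartProd_eq_image, line_castAdd_append, ← Set.image_inter (Fin.appendEquiv n m).injective,
    Set.prod_inter_prod, Set.ncard_image_of_injective _ (Fin.appendEquiv n m).injective,
    Set.ncard_prod]

theorem ncard_cartProd_inter_line_natAdd (B₁ : Set (Fin n → Fin k)) (B₂ : Set (Fin m → Fin k))
    (i : Fin m) (x : Fin n → Fin k) (y : Fin m → Fin k) :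
    (cartProd B₁ B₂ ∩ line (Fin.natAdd n i) (Fin.append x y)).ncard =
      (B₁ ∩ {x}).ncard * (B₂ ∩ line i y).ncard := by
  rw [cartProd_eq_image, line_natAdd_append, ← Set.image_inter (Fin.appendEquiv n m).injective,
    Set.prod_inter_prod, Set.ncard_image_of_injective _ (Fin.appendEquiv n m).injective,
    Set.ncard_prod]

theorem IsLatinBitrade.cartProd {B₁ : Set (Fin n → Fin k)} {B₂ : Set (Fin m → Fin k)}
    (h₁ : IsLatinBitrade B₁) (h₂ : IsLatinBitrade B₂) : IsLatinBitrade (cartProd B₁ B₂) := by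
  intro i a
  obtain ⟨⟨x, y⟩, rfl⟩ := (Fin.appendEquiv n m).surjective a
  simp only [Fin.appendEquiv, Equiv.coe_fn_mk]
  induction i using Fin.addCases with
  | left i =>
    have hy := (Set.ncard_inter_le_ncard_right B₂ {y}).trans (Set.ncard_singleton y).le
    rw [ncard_cartProd_inter_line_castAdd]
    rcases h₁ i x with h | h <;> rw [h] <;> omega
  | right i =>
    have hx := (Set.ncard_inter_le_ncard_right B₁ {x}).trans (Set.ncard_singleton x).le
    rw [ncard_cartProd_inter_line_natAdd]
    rcases h₂ i y with h | h <;> rw [h] <;> omega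

theorem colorable_induce_cartProd {B₁ : Set (Fin n → Fin k)} {B₂ : Set (Fin m → Fin k)} {c : ℕ}
    (h₁ : ((hammingGraph k n).induce B₁).Colorable c)
    (h₂ : ((hammingGraph k m).induce B₂).Colorable c) :
    ((hammingGraph k (n + m)).induce (cartProd B₁ B₂)).Colorable c := by
  rw [cartProd_eq_image]
  exact (h₁.induce_prod h₂).of_hom
    ((hammingGraphAppendIso k n m).induce (Fin.appendEquiv n m).injective.injOn.bijOn_image).symm.toHom

end Concatenation

theorem stmt_9 (k n m : ℕ) (B₁ : Set (Fin n → Fin k)) (B₂ : Set (Fin m → Fin k))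
    (h₁ : IsBipartiteBitrade B₁) (h₂ : IsBipartiteBitrade B₂) :
    IsBipartiteBitrade (cartProd B₁ B₂) :=
  ⟨h₁.1.cartProd h₂.1, colorable_induce_cartProd h₁.2 h₂.2⟩
end

section
/- Let B_1, B_2 ⊆ Q_k^n be bipartite latin bitrades such that the symmetric difference B_1 △ B_2 is a latin bitrade and the subgraph of the Hamming graph Γ Q_k^n induced by B_1 ∩ B_2 is connected. Then B_1 △ B_2 is a bipartite latin bitrade. -/
/-!
Colour `B₁` and `B₂` properly by `f, g : Q_k^n → Fin 2`. Along an edge of `B₁ ∩ B₂` both colourings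
flip, so `f + g` is constant, say `c`, on the connected set `B₁ ∩ B₂`. Colour `B₁ \ B₂` by `f` and
`B₂ \ B₁` by `g + c + 1`. The only edges to check join `x ∈ B₁ \ B₂` to `y ∈ B₂ \ B₁` along a line;
the second point `z` of `B₁` on that line cannot lie in the symmetric difference (whose two points on
the line are `x` and `y`), so `z ∈ B₁ ∩ B₂` is a common neighbour, and `f z ≠ f x`, `g z ≠ g y`,
`f z + g z = c` force `g y + c + 1 ≠ f x`.
-/

namespace SimpleGraph

variable {V : Type*} {G : SimpleGraph V} {s t : Set V}

lemma Preconnected.eq_of_forall_adj {W α : Type*} {H : SimpleGraph W} (hH : H.Preconnected)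
    {φ : W → α} (hφ : ∀ a b, H.Adj a b → φ a = φ b) (a b : W) : φ a = φ b := by
  obtain ⟨p⟩ := hH a b
  induction p with
  | nil => rfl
  | cons hadj _ ih => exact (hφ _ _ hadj).trans ih

def IsTwoColoringOn (G : SimpleGraph V) (s : Set V) (f : V → Fin 2) : Prop :=
  ∀ ⦃x⦄, x ∈ s → ∀ ⦃y⦄, y ∈ s → G.Adj x y → f x ≠ f y

lemma IsTwoColoringOn.mono {f : V → Fin 2} (hf : G.IsTwoColoringOn t f) (hst : s ⊆ t) :
    G.IsTwoColoringOn s f :=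
  fun _ hx _ hy => hf (hst hx) (hst hy)

lemma colorable_two_induce_iff :
    (G.induce s).Colorable 2 ↔ ∃ f, G.IsTwoColoringOn s f := by
  classical
  constructor
  · rintro ⟨C⟩
    refine ⟨fun x => if hx : x ∈ s then C ⟨x, hx⟩ else 0, fun x hx y hy hxy => ?_⟩
    dsimp only
    rw [dif_pos hx, dif_pos hy]
    exact C.valid (show (G.induce s).Adj ⟨x, hx⟩ ⟨y, hy⟩ from hxy)
  · rintro ⟨f, hf⟩
    exact ⟨.mk (fun x => f x) fun {x y} hxy => hf x.2 y.2 hxy⟩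

lemma IsTwoColoringOn.add_eq_add {f g : V → Fin 2} (hf : G.IsTwoColoringOn s f)
    (hg : G.IsTwoColoringOn s g) (hs : (G.induce s).Preconnected) {x y : V} (hx : x ∈ s)
    (hy : y ∈ s) : f x + g x = f y + g y := by
  refine hs.eq_of_forall_adj (φ := fun z : s => f z + g z) (fun a b hab => ?_) ⟨x, hx⟩ ⟨y, hy⟩
  have hflip : ∀ p q r u : Fin 2, p ≠ q → r ≠ u → p + r = q + u := by decide
  exact hflip _ _ _ _ (hf a.2 b.2 hab) (hg a.2 b.2 hab)

theorem colorable_two_induce_symmDiff (hs : (G.induce s).Colorable 2)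
    (ht : (G.induce t).Colorable 2) (hst : (G.induce (s ∩ t)).Connected)
    (hcross : ∀ x ∈ s \ t, ∀ y ∈ t \ s, G.Adj x y → ∃ z ∈ s ∩ t, G.Adj x z ∧ G.Adj y z) :
    (G.induce (symmDiff s t)).Colorable 2 := by
  classical
  obtain ⟨f, hf⟩ := colorable_two_induce_iff.mp hs
  obtain ⟨g, hg⟩ := colorable_two_induce_iff.mp ht
  obtain ⟨⟨v, hv⟩⟩ := hst.nonempty
  obtain ⟨c, hsum⟩ : ∃ c, ∀ z ∈ s ∩ t, f z + g z = c :=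
    ⟨f v + g v, fun z hz => (hf.mono Set.inter_subset_left).add_eq_add
      (hg.mono Set.inter_subset_right) hst.preconnected hz hv⟩
  refine colorable_two_induce_iff.mpr ⟨fun x => if x ∈ s then f x else g x + c + 1, ?_⟩
  have hmixed : ∀ x ∈ s \ t, ∀ y ∈ t \ s, G.Adj x y → f x ≠ g y + c + 1 := by
    rintro x hx y hy hxy
    obtain ⟨z, hz, hxz, hyz⟩ := hcross x hx y hy hxy
    have hflip : ∀ a b c d e : Fin 2, a ≠ b → e ≠ d → b + d = c → a ≠ e + c + 1 := by decide
    exact hflip _ _ _ _ _ (hf hx.1 hz.1 hxz) (hg hy.1 hz.2 hyz) (hsum z hz)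
  rintro x (⟨hxs, hxt⟩ | ⟨hxt, hxs⟩) y (⟨hys, hyt⟩ | ⟨hyt, hys⟩) hxy
  · simpa [hxs, hys] using hf hxs hys hxy
  · simpa [hxs, hys] using hmixed x ⟨hxs, hxt⟩ y ⟨hyt, hys⟩ hxy
  · simpa [hxs, hys, eq_comm] using hmixed y ⟨hys, hyt⟩ x ⟨hxt, hxs⟩ hxy.symm
  · simpa [hxs, hys] using hg hxt hyt hxy

end SimpleGraph

section Hamming

variable {k n : ℕ}

lemma hammingGraph_adj_iff {x y : Fin n → Fin k} :
    (hammingGraph k n).Adj x y ↔ x ≠ y ∧ ∃ i, y ∈ line i x := by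
  change (Finset.univ.filter fun j => x j ≠ y j).card = 1 ↔ _
  rw [Finset.card_eq_one]
  constructor
  · rintro ⟨i, hi⟩
    have hdiff : ∀ j, x j ≠ y j ↔ j = i := fun j => by
      simpa using Finset.ext_iff.mp hi j
    exact ⟨fun h => (hdiff i).mpr rfl (congrFun h i),
      i, fun j hj => of_not_not fun h => hj ((hdiff j).mp (Ne.symm h))⟩
  · rintro ⟨hxy, i, hy⟩
    refine ⟨i, Finset.eq_singleton_iff_unique_mem.mpr ⟨?_, fun j hj => ?_⟩⟩
    · obtain ⟨j, hj⟩ := Function.ne_iff.mp hxy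
      simp only [Finset.mem_filter, Finset.mem_univ, true_and]
      by_cases hji : j = i
      · exact hji ▸ hj
      · exact absurd (hy j hji).symm hj
    · exact of_not_not fun hji => (Finset.mem_filter.mp hj).2 (hy j hji).symm

lemma hammingGraph_adj_of_mem_line {i : Fin n} {a x y : Fin n → Fin k} (hx : x ∈ line i a)
    (hy : y ∈ line i a) (hxy : x ≠ y) : (hammingGraph k n).Adj x y :=
  hammingGraph_adj_iff.mpr ⟨hxy, i, fun j hj => (hy j hj).trans (hx j hj).symm⟩

lemma mem_line_self (i : Fin n) (a : Fin n → Fin k) : a ∈ line i a :=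
  fun _ _ => rfl

namespace IsLatinBitrade

variable {B : Set (Fin n → Fin k)}

lemma exists_ne_mem_line (hB : IsLatinBitrade B) {x : Fin n → Fin k} (hx : x ∈ B) (i : Fin n) :
    ∃ z ∈ B ∩ line i x, z ≠ x := by
  have hmem : x ∈ B ∩ line i x := ⟨hx, mem_line_self i x⟩
  have htwo : (B ∩ line i x).ncard = 2 :=
    (hB i x).resolve_left (Set.ncard_ne_zero_of_mem hmem (Set.toFinite _))
  exact Set.exists_ne_of_one_lt_ncard (by omega) x

lemma eq_of_mem_line (hB : IsLatinBitrade B) {i : Fin n} {a x y z : Fin n → Fin k}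
    (hx : x ∈ B ∩ line i a) (hy : y ∈ B ∩ line i a) (hz : z ∈ B ∩ line i a)
    (hxy : x ≠ y) (hxz : x ≠ z) : y = z := by
  by_contra hyz
  have hthree : ({x, y, z} : Set _).ncard = 3 :=
    Set.ncard_eq_three.mpr ⟨x, y, z, hxy, hxz, hyz, rfl⟩
  have hle : ({x, y, z} : Set _).ncard ≤ (B ∩ line i a).ncard :=
    Set.ncard_le_ncard
      (Set.insert_subset hx (Set.insert_subset hy (Set.singleton_subset_iff.mpr hz)))
      (Set.toFinite _)
  rcases hB i a with h | h <;> omega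

end IsLatinBitrade

lemma exists_common_neighbor_of_adj {B₁ B₂ : Set (Fin n → Fin k)} (h₁ : IsLatinBitrade B₁)
    (hsd : IsLatinBitrade (symmDiff B₁ B₂)) {x y : Fin n → Fin k} (hx : x ∈ B₁ \ B₂)
    (hy : y ∈ B₂ \ B₁) (hxy : (hammingGraph k n).Adj x y) :
    ∃ z ∈ B₁ ∩ B₂, (hammingGraph k n).Adj x z ∧ (hammingGraph k n).Adj y z := by
  obtain ⟨hne, i, hyx⟩ := hammingGraph_adj_iff.mp hxy
  obtain ⟨z, ⟨hz₁, hzx⟩, hz⟩ := h₁.exists_ne_mem_line hx.1 i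
  have hz₂ : z ∈ B₂ := by
    by_contra hz₂
    have := hsd.eq_of_mem_line ⟨Or.inl hx, mem_line_self i x⟩ ⟨Or.inr hy, hyx⟩
      ⟨Or.inl ⟨hz₁, hz₂⟩, hzx⟩ hne (Ne.symm hz)
    exact hy.2 (this ▸ hz₁)
  exact ⟨z, ⟨hz₁, hz₂⟩, hammingGraph_adj_of_mem_line (mem_line_self i x) hzx (Ne.symm hz),
    hammingGraph_adj_of_mem_line hyx hzx fun h => hy.2 (h ▸ hz₁)⟩

end Hamming

theorem stmt_11 (k n : ℕ) (B₁ B₂ : Set (Fin n → Fin k))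
    (h₁ : IsBipartiteBitrade B₁) (h₂ : IsBipartiteBitrade B₂)
    (hsd : IsLatinBitrade (symmDiff B₁ B₂))
    (hconn : ((hammingGraph k n).induce (B₁ ∩ B₂)).Connected) :
    IsBipartiteBitrade (symmDiff B₁ B₂) :=
  ⟨hsd, SimpleGraph.colorable_two_induce_symmDiff h₁.2 h₂.2 hconn
    fun _ hx _ hy hxy => exists_common_neighbor_of_adj h₁.1 hsd hx hy hxy⟩
end
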